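/- The polynomial (∂/∂x)(∫₀^z V̂_ω(y,x) dy) evaluated at x = 1, where V̂_ω(z,x) = V_ω(2z, x/2), equals z²/2 + (1/3)·Σ_{i=2}^{ω} z^{i+1}; equivalently, for each 0 ≤ i ≤ ω, the coefficient of z^{i+1} in this polynomial is E_{L,R}(i)/(i+1) where E_{L,R}(i) = Σ_j j·2^{i-j} e_{i,j}/i! is the Yule-expected number of cherries in a ranked tree of size i, and E_{L,R}(i) = (i+1)/3 for i ≥ 2, E_{L,R}(1) = 1, E_{L,R}(0) = 0. -/

import Mathlib

/-!
Common definitions: plane (ordered) labeled binary trees, the flip relation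
generating the "unordered" identification, ranked trees, Ω-trees, and counts.
-/

/-- Plane rooted binary trees whose internal nodes carry a label. -/
inductive PTree : Type where
  | leaf : PTree
  | node : ℕ → PTree → PTree → PTree
deriving DecidableEq

namespace PTree

/-- Size: the number of internal nodes. -/
def size : PTree → ℕ
  | leaf => 0
  | node _ l r => l.size + r.size + 1

/-- Number of cherries: internal nodes whose two children are leaves. -/
def cherries : PTree → ℕ
  | leaf => 0
  | node _ leaf leaf => 1
  | node _ l r => l.cherries + r.cherries

/-- Multiset of labels of internal nodes. -/
def labels : PTree → Multiset ℕ
  | leaf => 0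
  | node k l r => k ::ₘ (l.labels + r.labels)

/-- Labels increase away from the root: each internal node's label is smaller
than all labels in its subtrees. -/
def Incr : PTree → Prop
  | leaf => True
  | node k l r =>
      (∀ m ∈ l.labels, k < m) ∧ (∀ m ∈ r.labels, k < m) ∧ Incr l ∧ Incr r

/-- A ranked tree of size `n`: labels increase from the root and the internal
labels are exactly `{1, …, n}` (each occurring once). -/
def IsRanked (n : ℕ) (t : PTree) : Prop :=
  t.Incr ∧ t.labels = (Finset.Icc 1 n).val

/-- The Ω-condition: at every internal node, the smaller of the two child
subtrees has at most `ω` internal nodes. -/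
def OmegaOK (ω : ℕ) : PTree → Prop
  | leaf => True
  | node _ l r => min l.size r.size ≤ ω ∧ OmegaOK ω l ∧ OmegaOK ω r

/-- One-step flip: swap the two children of some internal node. -/
inductive Flip : PTree → PTree → Prop
  | swap (k : ℕ) (l r : PTree) : Flip (node k l r) (node k r l)
  | congL {l l' : PTree} (k : ℕ) (r : PTree) : Flip l l' → Flip (node k l r) (node k l' r)
  | congR {r r' : PTree} (k : ℕ) (l : PTree) : Flip r r' → Flip (node k l r) (node k l r')

end PTree

/-- Setoid on trees satisfying `P`, identifying trees up to swapping children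
(so that left/right order is immaterial). -/
def treeSetoid (P : PTree → Prop) : Setoid {t : PTree // P t} :=
  Relation.EqvGen.setoid (fun a b => PTree.Flip a.1 b.1)

/-- `|R_n|` : the number of ranked trees (histories) of size `n`. -/
noncomputable def rankedCount (n : ℕ) : ℕ :=
  Nat.card (Quotient (treeSetoid (PTree.IsRanked n)))

/-- `e_{n,l}` : the number of ranked trees of size `n` with `l` cherries. -/
noncomputable def rankedCountC (n l : ℕ) : ℕ :=
  Nat.card (Quotient (treeSetoid (fun t => PTree.IsRanked n t ∧ t.cherries = l)))

/-- `|Ω^ω_n|` : the number of Ω^ω-trees of size `n`. -/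
noncomputable def omegaCount (ω n : ℕ) : ℕ :=
  Nat.card (Quotient (treeSetoid (fun t => PTree.IsRanked n t ∧ PTree.OmegaOK ω t)))

/-- `|Ω^ω_{n,l}|` : the number of Ω^ω-trees of size `n` with `l` cherries. -/
noncomputable def omegaCountC (ω n l : ℕ) : ℕ :=
  Nat.card (Quotient (treeSetoid
    (fun t => PTree.IsRanked n t ∧ PTree.OmegaOK ω t ∧ t.cherries = l)))

/-- `E_{L,R}(i)`: the Yule-expected number of cherries of a random ranked tree
of size `i`, i.e. `∑_j j · 2^{i-j} e_{i,j} / i!`. -/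
noncomputable def expCherries (i : ℕ) : ℚ :=
  ∑ j ∈ Finset.range (i + 1),
    (j : ℚ) * 2 ^ (i - j) * (rankedCountC i j : ℚ) / (i.factorial : ℚ)

/-!
Weighting a ranked tree with `j` cherries by `2^(n-j)` amounts to counting its plane
representatives: swapping the children of a node changes the plane tree unless both children are
leaves. Hence `E_{L,R}(n)` is the average number of cherries of the `n!` plane increasing trees of
size `n`. These arise by inserting the labels `1, …, n` in turn as a new cherry at one of the
current leaves. Inserting at one of the `2c` leaves lying in cherries keeps the number `c` of
cherries, inserting at any of the other `n + 1 - 2c` leaves raises it by one, so the total `T n`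
satisfies `T (n + 1) = (n + 1) (T n + n!) - 2 T n`, whence `3 T n = (n + 1) n!` for `n ≥ 2`.
-/

open scoped Nat

namespace Relation.EqvGen

variable {α β : Type*} {r : α → α → Prop} {a b : α}

theorem map {s : β → β → Prop} (f : α → β) (hf : ∀ x y, r x y → s (f x) (f y))
    (h : EqvGen r a b) : EqvGen s (f a) (f b) := by
  induction h with
  | rel x y hxy => exact .rel _ _ (hf x y hxy)
  | refl => exact .refl _
  | symm _ _ _ ih => exact .symm _ _ ih
  | trans _ _ _ _ _ ih₁ ih₂ => exact .trans _ _ _ ih₁ ih₂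

theorem apply_eq {f : α → β} (hf : ∀ x y, r x y → f x = f y) (h : EqvGen r a b) :
    f a = f b :=
  congrArg (Quot.lift f hf) (Quot.eqvGen_sound h)

theorem iff_of_invariant {P : α → Prop} (hP : ∀ x y, r x y → (P x ↔ P y))
    (h : EqvGen r a b) : P a ↔ P b :=
  Iff.of_eq (h.apply_eq fun x y hxy => propext (hP x y hxy))

theorem subtype_iff {P : α → Prop} (hP : ∀ x y, r x y → (P x ↔ P y)) {x y : Subtype P} :
    EqvGen (fun u v : Subtype P => r u v) x y ↔ EqvGen r x y := by
  refine ⟨map Subtype.val fun _ _ => id, fun h => ?_⟩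
  suffices ∀ u v, EqvGen r u v → ∀ (hu : P u) (hv : P v),
      EqvGen (fun u v : Subtype P => r u v) ⟨u, hu⟩ ⟨v, hv⟩ from this _ _ h x.2 y.2
  intro u v huv
  induction huv with
  | rel u v huv => exact fun _ _ => .rel _ _ huv
  | refl => exact fun _ _ => .refl _
  | symm _ _ _ ih => exact fun hu hv => .symm _ _ (ih hv hu)
  | trans u v w huv _ ih₁ ih₂ =>
    intro hu hw
    have hv : P v := (huv.iff_of_invariant hP).1 hu
    exact .trans _ ⟨v, hv⟩ _ (ih₁ hu hv) (ih₂ hv hw)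

end Relation.EqvGen

theorem Setoid.card_eq_card_quotient_mul {α : Type*} [Finite α] (s : Setoid α) {m : ℕ}
    (h : ∀ a, Nat.card {b // s b a} = m) : Nat.card α = Nat.card (Quotient s) * m := by
  have : Fintype α := Fintype.ofFinite α
  have : Fintype (Quotient s) := Fintype.ofFinite _
  have hfiber : ∀ q : Quotient s, Nat.card {a // Quotient.mk s a = q} = m := by
    refine Quotient.ind fun a => ?_
    rw [← h a]
    exact Nat.card_congr (Equiv.subtypeEquivRight fun b => Quotient.eq)
  rw [← Nat.card_congr (Equiv.sigmaFiberEquiv (Quotient.mk s)), Nat.card_sigma,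
    Finset.sum_congr rfl fun q _ => hfiber q, Finset.sum_const, Finset.card_univ, smul_eq_mul,
    Nat.card_eq_fintype_card]

theorem Finset.val_Icc_add_one {a b : ℕ} (h : a ≤ b + 1) :
    (Finset.Icc a (b + 1)).val = (b + 1) ::ₘ (Finset.Icc a b).val := by
  rw [← Finset.insert_Icc_right_eq_Icc_add_one h, Finset.insert_val,
    Multiset.ndinsert_of_notMem (by simp)]

namespace PTree

lemma card_labels (t : PTree) : Multiset.card t.labels = t.size := by
  induction t with
  | leaf => rfl
  | node k l r ihl ihr => simp [labels, size, ihl, ihr]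

lemma eq_leaf_of_labels_eq_zero {t : PTree} (h : t.labels = 0) : t = leaf := by
  cases t with
  | leaf => rfl
  | node k l r => simp [labels] at h

lemma IsRanked.size_eq {n : ℕ} {t : PTree} (h : IsRanked n t) : t.size = n := by
  rw [← card_labels, h.2]; simp

lemma cherries_node {k : ℕ} {l r : PTree} (h : ¬(l = leaf ∧ r = leaf)) :
    (node k l r).cherries = l.cherries + r.cherries := by
  cases l <;> cases r <;> first | rfl | exact absurd ⟨rfl, rfl⟩ h

lemma cherries_le_size (t : PTree) : t.cherries ≤ t.size := by
  induction t with
  | leaf => exact le_rfl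
  | node k l r ihl ihr =>
    by_cases hc : l = leaf ∧ r = leaf
    · obtain ⟨rfl, rfl⟩ := hc; exact le_rfl
    · rw [cherries_node hc, size]; omega

def grow (k : ℕ) : PTree → List PTree
  | leaf => [node k leaf leaf]
  | node m l r => (grow k l).map (node m · r) ++ (grow k r).map (node m l ·)

def prune (k : ℕ) : PTree → PTree
  | leaf => leaf
  | node m l r => if m = k then leaf else node m (prune k l) (prune k r)

lemma length_grow (k : ℕ) (t : PTree) : (grow k t).length = t.size + 1 := by
  induction t with
  | leaf => rfl
  | node m l r ihl ihr => simp [grow, size, ihl, ihr]; omega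

lemma labels_of_mem_grow {k : ℕ} {t s : PTree} (h : s ∈ grow k t) :
    s.labels = k ::ₘ t.labels := by
  induction t generalizing s with
  | leaf => simp_all [grow, labels]
  | node m l r ihl ihr =>
    simp only [grow, List.mem_append, List.mem_map] at h
    rcases h with ⟨a, ha, rfl⟩ | ⟨a, ha, rfl⟩
    · rw [labels, labels, ihl ha, Multiset.cons_add, Multiset.cons_swap]
    · rw [labels, labels, ihr ha, Multiset.add_cons, Multiset.cons_swap]

lemma size_of_mem_grow {k : ℕ} {t s : PTree} (h : s ∈ grow k t) : s.size = t.size + 1 := by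
  rw [← card_labels, ← card_labels, labels_of_mem_grow h, Multiset.card_cons]

lemma ne_leaf_of_mem_grow {k : ℕ} {t s : PTree} (h : s ∈ grow k t) : s ≠ leaf := by
  rintro rfl
  simpa [labels] using labels_of_mem_grow h

lemma incr_of_mem_grow {k : ℕ} {t s : PTree} (ht : t.Incr) (hk : ∀ m ∈ t.labels, m < k)
    (h : s ∈ grow k t) : s.Incr := by
  induction t generalizing s with
  | leaf => simp_all [grow, Incr, labels]
  | node m l r ihl ihr =>
    obtain ⟨hl, hr, hil, hir⟩ := ht
    simp only [labels, Multiset.mem_cons, Multiset.mem_add] at hk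
    simp only [grow, List.mem_append, List.mem_map] at h
    rcases h with ⟨a, ha, rfl⟩ | ⟨a, ha, rfl⟩
    · refine ⟨?_, hr, ihl hil (fun x hx => hk x (.inr (.inl hx))) ha, hir⟩
      rw [labels_of_mem_grow ha]
      exact Multiset.forall_mem_cons.2 ⟨hk m (.inl rfl), hl⟩
    · refine ⟨hl, ?_, hil, ihr hir (fun x hx => hk x (.inr (.inr hx))) ha⟩
      rw [labels_of_mem_grow ha]
      exact Multiset.forall_mem_cons.2 ⟨hk m (.inl rfl), hr⟩

lemma prune_eq_self {k : ℕ} {t : PTree} (h : k ∉ t.labels) : prune k t = t := by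
  induction t with
  | leaf => rfl
  | node m l r ihl ihr =>
    simp only [labels, Multiset.mem_cons, Multiset.mem_add, not_or] at h
    simp [prune, Ne.symm h.1, ihl h.2.1, ihr h.2.2]

lemma prune_of_mem_grow {k : ℕ} {t s : PTree} (h : s ∈ grow k t) (hk : k ∉ t.labels) :
    prune k s = t := by
  induction t generalizing s with
  | leaf => simp_all [grow, prune]
  | node m l r ihl ihr =>
    simp only [labels, Multiset.mem_cons, Multiset.mem_add, not_or] at hk
    simp only [grow, List.mem_append, List.mem_map] at h
    rcases h with ⟨a, ha, rfl⟩ | ⟨a, ha, rfl⟩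
    · simp [prune, Ne.symm hk.1, ihl ha hk.2.1, prune_eq_self hk.2.2]
    · simp [prune, Ne.symm hk.1, ihr ha hk.2.2, prune_eq_self hk.2.1]

lemma labels_prune_le (k : ℕ) (t : PTree) : (prune k t).labels ≤ t.labels := by
  induction t with
  | leaf => exact le_rfl
  | node m l r ihl ihr =>
    by_cases h : m = k
    · simp [prune, h, labels]
    · rw [prune, if_neg h, labels, labels]
      exact Multiset.cons_le_cons m (add_le_add ihl ihr)

lemma incr_prune (k : ℕ) {t : PTree} (h : t.Incr) : (prune k t).Incr := by
  induction t with
  | leaf => trivial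
  | node m l r ihl ihr =>
    obtain ⟨hl, hr, hil, hir⟩ := h
    by_cases hm : m = k
    · simp [prune, hm, Incr]
    · rw [prune, if_neg hm]
      exact ⟨fun x hx => hl x (Multiset.mem_of_le (labels_prune_le k l) hx),
        fun x hx => hr x (Multiset.mem_of_le (labels_prune_le k r) hx), ihl hil, ihr hir⟩

/-- The largest label of an increasing tree sits at a cherry. -/
lemma mem_grow_prune {k : ℕ} {t : PTree} (ht : t.Incr) (hnd : t.labels.Nodup)
    (hk : k ∈ t.labels) (hmax : ∀ m ∈ t.labels, m ≤ k) : t ∈ grow k (prune k t) := by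
  induction t with
  | leaf => simp [labels] at hk
  | node m l r ihl ihr =>
    obtain ⟨hl, hr, hil, hir⟩ := ht
    simp only [labels, Multiset.mem_cons, Multiset.mem_add] at hk hmax
    rw [labels, Multiset.nodup_cons, Multiset.nodup_add] at hnd
    obtain ⟨-, hndl, hndr, hdisj⟩ := hnd
    by_cases hm : m = k
    · subst hm
      have hleaf : ∀ u : PTree, (∀ x ∈ u.labels, m < x) → (∀ x ∈ u.labels, x ≤ m) →
          u = leaf :=
        fun u hlt hle => eq_leaf_of_labels_eq_zero <| Multiset.eq_zero_of_forall_notMem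
          fun x hx => (hlt x hx).not_ge (hle x hx)
      rw [hleaf l hl fun x hx => hmax x (.inr (.inl hx)),
        hleaf r hr fun x hx => hmax x (.inr (.inr hx))]
      simp [prune, grow]
    · simp only [prune, if_neg hm, grow, List.mem_append, List.mem_map]
      rcases hk with rfl | hk | hk
      · exact absurd rfl hm
      · rw [prune_eq_self fun h => Multiset.disjoint_left.1 hdisj hk h]
        exact .inl ⟨l, ihl hil hndl hk fun x hx => hmax x (.inr (.inl hx)), rfl⟩
      · rw [prune_eq_self fun h => Multiset.disjoint_left.1 hdisj h hk]
        exact .inr ⟨r, ihr hir hndr hk fun x hx => hmax x (.inr (.inr hx)), rfl⟩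

lemma nodup_grow (k : ℕ) {t : PTree} : (grow k t).Nodup := by
  induction t with
  | leaf => simp [grow]
  | node m l r ihl ihr =>
    rw [grow, List.nodup_append]
    refine ⟨ihl.map fun _ _ h => by cases h; rfl, ihr.map fun _ _ h => by cases h; rfl, ?_⟩
    simp only [List.mem_map]
    rintro _ ⟨a, ha, rfl⟩ _ ⟨b, hb, rfl⟩ h
    cases h
    have := size_of_mem_grow hb
    omega

def rankedPlaneTrees : ℕ → List PTree
  | 0 => [leaf]
  | n + 1 => (rankedPlaneTrees n).flatMap (grow (n + 1))

lemma IsRanked.of_mem_grow {n : ℕ} {t s : PTree} (ht : IsRanked n t) (hs : s ∈ grow (n + 1) t) :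
    IsRanked (n + 1) s := by
  refine ⟨incr_of_mem_grow ht.1 (fun m hm => ?_) hs, ?_⟩
  · rw [ht.2, Finset.mem_val, Finset.mem_Icc] at hm
    omega
  · rw [labels_of_mem_grow hs, ht.2, Finset.val_Icc_add_one (Nat.le_add_left 1 n)]

lemma IsRanked.mem_grow_prune {n : ℕ} {t : PTree} (ht : IsRanked (n + 1) t) :
    t ∈ grow (n + 1) (prune (n + 1) t) :=
  PTree.mem_grow_prune ht.1 (ht.2 ▸ (Finset.Icc 1 (n + 1)).nodup) (by simp [ht.2])
    fun m hm => by rw [ht.2, Finset.mem_val, Finset.mem_Icc] at hm; omega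

lemma IsRanked.isRanked_prune {n : ℕ} {t : PTree} (ht : IsRanked (n + 1) t) :
    IsRanked n (prune (n + 1) t) := by
  refine ⟨incr_prune _ ht.1, ?_⟩
  rw [← Multiset.cons_inj_right (n + 1), ← labels_of_mem_grow ht.mem_grow_prune, ht.2,
    Finset.val_Icc_add_one (Nat.le_add_left 1 n)]

lemma mem_rankedPlaneTrees {n : ℕ} {t : PTree} : t ∈ rankedPlaneTrees n ↔ IsRanked n t := by
  induction n generalizing t with
  | zero =>
    rw [rankedPlaneTrees, List.mem_singleton]
    refine ⟨fun h => h ▸ ⟨trivial, rfl⟩, fun h => eq_leaf_of_labels_eq_zero ?_⟩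
    simpa using h.2
  | succ n ih =>
    simp only [rankedPlaneTrees, List.mem_flatMap, ih]
    constructor
    · rintro ⟨s, hs, ht⟩; exact hs.of_mem_grow ht
    · exact fun ht => ⟨_, ht.isRanked_prune, ht.mem_grow_prune⟩

lemma nodup_rankedPlaneTrees (n : ℕ) : (rankedPlaneTrees n).Nodup := by
  induction n with
  | zero => simp [rankedPlaneTrees]
  | succ n ih =>
    refine List.nodup_flatMap.2 ⟨fun _ _ => nodup_grow _, ih.pairwise_of_forall_ne ?_⟩
    intro a ha b hb hne s hsa hsb
    have hnot : ∀ u ∈ rankedPlaneTrees n, n + 1 ∉ u.labels := fun u hu => by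
      simp [(mem_rankedPlaneTrees.1 hu).2]
    exact hne ((prune_of_mem_grow hsa (hnot a ha)).symm.trans (prune_of_mem_grow hsb (hnot b hb)))

lemma length_rankedPlaneTrees (n : ℕ) : (rankedPlaneTrees n).length = n ! := by
  induction n with
  | zero => rfl
  | succ n ih =>
    rw [rankedPlaneTrees, List.length_flatMap, List.map_congr_left (g := fun _ => n + 1),
      List.map_const', List.sum_replicate, ih, smul_eq_mul, Nat.factorial_succ, mul_comm]
    intro t ht
    rw [length_grow, (mem_rankedPlaneTrees.1 ht).size_eq]

/-- Growing a leaf of a cherry leaves the number of cherries unchanged, growing any other leaf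
adds one; `t` has `2 * t.cherries` leaves of the first kind among its `t.size + 1` leaves. -/
lemma sum_cherries_grow (k : ℕ) (t : PTree) :
    ((grow k t).map cherries).sum + 2 * t.cherries = (t.size + 1) * (t.cherries + 1) := by
  induction t with
  | leaf => rfl
  | node m l r ihl ihr =>
    by_cases hc : l = leaf ∧ r = leaf
    · obtain ⟨rfl, rfl⟩ := hc; rfl
    have hl : ∀ a ∈ grow k l, (node m a r).cherries = a.cherries + r.cherries :=
      fun a ha => cherries_node fun h => ne_leaf_of_mem_grow ha h.1
    have hr : ∀ b ∈ grow k r, (node m l b).cherries = l.cherries + b.cherries :=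
      fun b hb => cherries_node fun h => ne_leaf_of_mem_grow hb h.2
    rw [grow, List.map_append, List.sum_append, List.map_map, List.map_map,
      List.map_congr_left (f := cherries ∘ (node m · r)) hl,
      List.map_congr_left (f := cherries ∘ (node m l ·)) hr, List.sum_map_add, List.sum_map_add,
      List.map_const', List.map_const', List.sum_replicate, List.sum_replicate, length_grow,
      length_grow, cherries_node hc, size, smul_eq_mul, smul_eq_mul]
    nlinarith

def totalCherries (n : ℕ) : ℕ := ((rankedPlaneTrees n).map cherries).sum

lemma totalCherries_succ (n : ℕ) :
    totalCherries (n + 1) + 2 * totalCherries n = (n + 1) * (totalCherries n + n !) := by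
  have hgrow : totalCherries (n + 1) =
      ((rankedPlaneTrees n).map fun t => ((grow (n + 1) t).map cherries).sum).sum := by
    rw [totalCherries, rankedPlaneTrees, List.map_flatMap, List.flatMap_def, List.sum_flatten,
      List.map_map]
    rfl
  have hsum : ∀ t ∈ rankedPlaneTrees n,
      ((grow (n + 1) t).map cherries).sum + 2 * t.cherries = (n + 1) * t.cherries + (n + 1) := by
    intro t ht
    rw [sum_cherries_grow, (mem_rankedPlaneTrees.1 ht).size_eq, mul_add, mul_one]
  rw [hgrow, totalCherries, ← List.sum_map_mul_left, ← List.sum_map_add,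
    List.map_congr_left hsum, List.sum_map_add, List.sum_map_mul_left, List.map_const',
    List.sum_replicate, length_rankedPlaneTrees, smul_eq_mul]
  ring

lemma three_mul_totalCherries {n : ℕ} (hn : 2 ≤ n) : 3 * totalCherries n = (n + 1) * n ! := by
  induction n, hn using Nat.le_induction with
  | base =>
    have h0 : totalCherries 0 = 0 := rfl
    have h1 := totalCherries_succ 0
    have h2 := totalCherries_succ 1
    norm_num [h0, Nat.factorial] at h1 h2 ⊢
    omega
  | succ n hn ih =>
    have h := totalCherries_succ n
    rw [Nat.factorial_succ]
    nlinarith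

lemma Flip.ne_leaf {a b : PTree} (h : Flip a b) : a ≠ leaf ∧ b ≠ leaf := by
  cases h <;> simp

lemma Flip.labels_eq {a b : PTree} (h : Flip a b) : a.labels = b.labels := by
  induction h with
  | swap k l r => rw [labels, labels, add_comm]
  | congL k r _ ih => rw [labels, labels, ih]
  | congR k l _ ih => rw [labels, labels, ih]

lemma Flip.cherries_eq {a b : PTree} (h : Flip a b) : a.cherries = b.cherries := by
  induction h with
  | swap k l r =>
    by_cases hc : l = leaf ∧ r = leaf
    · obtain ⟨rfl, rfl⟩ := hc; rfl
    · rw [cherries_node hc, cherries_node fun h => hc ⟨h.2, h.1⟩, add_comm]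
  | congL k r h ih =>
    rw [cherries_node (fun hh => h.ne_leaf.1 hh.1), cherries_node (fun hh => h.ne_leaf.2 hh.1), ih]
  | congR k l h ih =>
    rw [cherries_node (fun hh => h.ne_leaf.1 hh.2), cherries_node (fun hh => h.ne_leaf.2 hh.2), ih]

lemma Flip.incr_iff {a b : PTree} (h : Flip a b) : a.Incr ↔ b.Incr := by
  induction h with
  | swap k l r =>
    exact ⟨fun ⟨h₁, h₂, h₃, h₄⟩ => ⟨h₂, h₁, h₄, h₃⟩, fun ⟨h₁, h₂, h₃, h₄⟩ => ⟨h₂, h₁, h₄, h₃⟩⟩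
  | congL k r h ih => simp only [Incr, h.labels_eq, ih]
  | congR k l h ih => simp only [Incr, h.labels_eq, ih]

lemma Flip.isRanked_iff {n : ℕ} {a b : PTree} (h : Flip a b) : IsRanked n a ↔ IsRanked n b := by
  rw [IsRanked, IsRanked, h.incr_iff, h.labels_eq]

def orbit : PTree → Finset PTree
  | leaf => {leaf}
  | node k l r =>
      (orbit l ×ˢ orbit r).image (fun p => node k p.1 p.2) ∪
        (orbit l ×ˢ orbit r).image (fun p => node k p.2 p.1)

lemma Flip.orbit_eq {a b : PTree} (h : Flip a b) : orbit a = orbit b := by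
  induction h with
  | swap k l r =>
    have hswap : ∀ s t : Finset PTree, (s ×ˢ t).image (fun p => node k p.2 p.1) =
        (t ×ˢ s).image (fun p => node k p.1 p.2) := fun s t => by
      rw [← Finset.image_swap_product, Finset.image_image]; rfl
    rw [orbit, orbit, hswap, hswap, Finset.union_comm]
  | congL k r _ ih => rw [orbit, orbit, ih]
  | congR k l _ ih => rw [orbit, orbit, ih]

lemma mem_orbit_self (t : PTree) : t ∈ orbit t := by
  induction t with
  | leaf => exact Finset.mem_singleton_self _
  | node k l r ihl ihr =>
    exact Finset.mem_union_left _
      (Finset.mem_image.2 ⟨(l, r), Finset.mem_product.2 ⟨ihl, ihr⟩, rfl⟩)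

lemma eqvGen_of_mem_orbit {t s : PTree} (h : s ∈ orbit t) : Relation.EqvGen Flip t s := by
  induction t generalizing s with
  | leaf =>
    simp only [orbit, Finset.mem_singleton] at h
    exact h ▸ .refl _
  | node k l r ihl ihr =>
    have hnode : ∀ a ∈ orbit l, ∀ b ∈ orbit r,
        Relation.EqvGen Flip (node k l r) (node k a b) :=
      fun a ha b hb => .trans _ _ _ ((ihl ha).map (node k · r) fun _ _ => .congL k r)
        ((ihr hb).map (node k a ·) fun _ _ => .congR k a)
    simp only [orbit, Finset.mem_union, Finset.mem_image, Finset.mem_product] at h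
    rcases h with ⟨⟨a, b⟩, ⟨ha, hb⟩, rfl⟩ | ⟨⟨a, b⟩, ⟨ha, hb⟩, rfl⟩
    · exact hnode a ha b hb
    · exact .trans _ _ _ (hnode a ha b hb) (.rel _ _ (.swap k a b))

lemma mem_orbit_iff {t s : PTree} : s ∈ orbit t ↔ Relation.EqvGen Flip t s :=
  ⟨eqvGen_of_mem_orbit, fun h => h.apply_eq (fun _ _ hf => hf.orbit_eq) ▸ mem_orbit_self s⟩

lemma labels_of_mem_orbit {t s : PTree} (h : s ∈ orbit t) : s.labels = t.labels :=
  ((mem_orbit_iff.1 h).apply_eq fun _ _ hf => hf.labels_eq).symm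

/-- With distinct labels, the two children of a node can only be swapped onto each other when
both are leaves; every other internal node doubles the orbit. -/
lemma card_orbit {t : PTree} (ht : t.labels.Nodup) :
    (orbit t).card = 2 ^ (t.size - t.cherries) := by
  induction t with
  | leaf => rfl
  | node k l r ihl ihr =>
    rw [labels, Multiset.nodup_cons, Multiset.nodup_add] at ht
    obtain ⟨-, hndl, hndr, hdisj⟩ := ht
    by_cases hc : l = leaf ∧ r = leaf
    · obtain ⟨rfl, rfl⟩ := hc
      simp [orbit, size, cherries]
    have hdisjoint : Disjoint ((orbit l ×ˢ orbit r).image (fun p => node k p.1 p.2))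
        ((orbit l ×ˢ orbit r).image (fun p => node k p.2 p.1)) := by
      simp only [Finset.disjoint_left, Finset.mem_image, Finset.mem_product]
      rintro _ ⟨⟨a, b⟩, ⟨ha, hb⟩, rfl⟩ ⟨⟨a', b'⟩, ⟨ha', hb'⟩, he⟩
      cases he
      have hlr : l.labels = r.labels := by
        rw [← labels_of_mem_orbit ha, labels_of_mem_orbit hb']
      have hzero : ∀ u : PTree, u.labels = r.labels → u = leaf := fun u hu =>
        eq_leaf_of_labels_eq_zero <| Multiset.eq_zero_of_forall_notMem fun x hx =>
          Multiset.disjoint_left.1 hdisj (hlr ▸ hu ▸ hx) (hu ▸ hx)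
      exact hc ⟨hzero l hlr, hzero r rfl⟩
    have hinj₁ : Function.Injective fun p : PTree × PTree => node k p.1 p.2 :=
      fun ⟨_, _⟩ ⟨_, _⟩ h => by cases h; rfl
    have hinj₂ : Function.Injective fun p : PTree × PTree => node k p.2 p.1 :=
      fun ⟨_, _⟩ ⟨_, _⟩ h => by cases h; rfl
    rw [orbit, Finset.card_union_of_disjoint hdisjoint, Finset.card_image_of_injective _ hinj₁,
      Finset.card_image_of_injective _ hinj₂, Finset.card_product, ihl hndl, ihr hndr,
      cherries_node hc, size, ← two_mul, ← pow_add, ← pow_succ']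
    have := cherries_le_size l
    have := cherries_le_size r
    congr 1
    omega

open Finset

lemma card_isRanked_cherries_eq_card_filter (n j : ℕ) :
    Nat.card {t // IsRanked n t ∧ t.cherries = j} =
      #{t ∈ (rankedPlaneTrees n).toFinset | t.cherries = j} := by
  rw [← Nat.card_eq_finsetCard]
  exact Nat.card_congr (Equiv.subtypeEquivRight fun t => by simp [mem_rankedPlaneTrees])

/-- Every flip class is an orbit of size `2 ^ (n - j)`. -/
lemma card_isRanked_cherries_eq_mul (n j : ℕ) :
    Nat.card {t // IsRanked n t ∧ t.cherries = j} = rankedCountC n j * 2 ^ (n - j) := by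
  set P := fun t : PTree => IsRanked n t ∧ t.cherries = j
  have hP : ∀ a b, Flip a b → (P a ↔ P b) := fun a b h => by
    simp only [P, h.isRanked_iff, h.cherries_eq]
  have : Finite {t // P t} :=
    Finite.of_equiv {t // t ∈ {t ∈ (rankedPlaneTrees n).toFinset | cherries t = j}}
      (Equiv.subtypeEquivRight fun t => by simp [P, mem_rankedPlaneTrees])
  refine Setoid.card_eq_card_quotient_mul (treeSetoid P) fun a => ?_
  have hfiber : {b // treeSetoid P b a} ≃ {s // s ∈ orbit a.1} :=
    (Equiv.subtypeEquivRight fun b => (Relation.EqvGen.subtype_iff hP).trans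
        ⟨fun h => mem_orbit_iff.2 (.symm _ _ h), fun h => .symm _ _ (mem_orbit_iff.1 h)⟩).trans
      (Equiv.subtypeSubtypeEquivSubtype fun hs =>
        ((mem_orbit_iff.1 hs).iff_of_invariant hP).1 a.2)
  rw [Nat.card_congr hfiber, Nat.card_eq_finsetCard,
    card_orbit (a.2.1.2 ▸ (Finset.Icc 1 n).nodup), a.2.1.size_eq, a.2.2]

lemma sum_mul_card_isRanked_cherries (n : ℕ) :
    ∑ j ∈ range (n + 1), j * Nat.card {t // IsRanked n t ∧ t.cherries = j} =
      totalCherries n := by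
  have hmaps : ∀ t ∈ (rankedPlaneTrees n).toFinset, t.cherries ∈ range (n + 1) := by
    intro t ht
    have := cherries_le_size t
    rw [(mem_rankedPlaneTrees.1 (List.mem_toFinset.1 ht)).size_eq] at this
    exact mem_range.2 (by omega)
  rw [totalCherries, ← List.sum_toFinset _ (nodup_rankedPlaneTrees n),
    ← sum_fiberwise_of_maps_to hmaps]
  refine sum_congr rfl fun j _ => ?_
  rw [card_isRanked_cherries_eq_card_filter, sum_const_nat fun t ht => (mem_filter.1 ht).2,
    mul_comm]

lemma expCherries_eq (n : ℕ) : expCherries n = totalCherries n / n ! := by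
  rw [expCherries, ← sum_div, ← sum_mul_card_isRanked_cherries]
  push_cast
  congr 1
  refine sum_congr rfl fun j _ => ?_
  rw [card_isRanked_cherries_eq_mul]
  push_cast
  ring

end PTree

open PTree

lemma expCherries_zero : expCherries 0 = 0 := by
  simp [expCherries_eq, totalCherries, rankedPlaneTrees, cherries]

lemma expCherries_one : expCherries 1 = 1 := by
  simp [expCherries_eq, totalCherries, rankedPlaneTrees, grow, cherries]

lemma expCherries_of_two_le {n : ℕ} (hn : 2 ≤ n) : expCherries n = ((n : ℚ) + 1) / 3 := by
  have h : (3 : ℚ) * totalCherries n = (n + 1) * n ! := by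
    exact_mod_cast three_mul_totalCherries hn
  rw [expCherries_eq, div_eq_div_iff (by positivity) (by norm_num)]
  linarith

/-- the polynomial `(∂/∂x ∫₀^z V̂_ω(y,x) dy)|_{x=1}`, whose
coefficient of `z^{i+1}` is `E_{L,R}(i)/(i+1)` for `0 ≤ i ≤ ω`, equals
`z²/2 + (1/3)·∑_{i=2}^{ω} z^{i+1}`; equivalently `E_{L,R}(0)=0`,
`E_{L,R}(1)=1` and `E_{L,R}(i)=(i+1)/3` for `i ≥ 2`. -/
theorem expected_cherries_polynomial :
    expCherries 0 = 0 ∧ expCherries 1 = 1 ∧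
    (∀ i : ℕ, 2 ≤ i → expCherries i = ((i : ℚ) + 1) / 3) ∧
    (∀ ω : ℕ, 1 ≤ ω →
      ∑ i ∈ Finset.range (ω + 1),
          Polynomial.C (expCherries i / ((i : ℚ) + 1)) * Polynomial.X ^ (i + 1) =
        Polynomial.C (1 / 2 : ℚ) * Polynomial.X ^ 2 +
          Polynomial.C (1 / 3 : ℚ) * ∑ i ∈ Finset.Icc 2 ω, Polynomial.X ^ (i + 1)) := by
  refine ⟨expCherries_zero, expCherries_one, fun _ => expCherries_of_two_le, fun ω _ => ?_⟩
  have hrange : Finset.range (ω + 1) = {0, 1} ∪ Finset.Icc 2 ω := by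
    ext i; simp only [Finset.mem_range, Finset.mem_union, Finset.mem_insert,
      Finset.mem_singleton, Finset.mem_Icc]; omega
  have htail : ∀ i ∈ Finset.Icc 2 ω,
      Polynomial.C (expCherries i / ((i : ℚ) + 1)) * Polynomial.X ^ (i + 1) =
        Polynomial.C (1 / 3 : ℚ) * Polynomial.X ^ (i + 1) := fun i hi => by
    rw [expCherries_of_two_le (Finset.mem_Icc.1 hi).1, div_div_cancel_left' (by positivity)]
    norm_num
  rw [hrange, Finset.sum_union (by simp), Finset.sum_pair zero_ne_one, Finset.sum_congr rfl htail,
    ← Finset.mul_sum, expCherries_zero, expCherries_one]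
  norm_num
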